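/- arXiv:2508.21315 — 5 statements merged into one kernel-verified Lean document; each statement's English description precedes it below -/
import Mathlib

section
/- Let a_+, a_- > 0 and h_c > 0 with √(a_+) + √(a_-) < √(2/h_c), and set b = (a_+ + a_-)/2 - 1/h_c and d = √(b^2 - a_+ a_-). Then b < -√(a_+ a_-) < 0 and b + d < 0. -/
/-- If `√a₊ + √a₋ < √(2/h_c)` with `a₊, a₋, h_c > 0`, then for
`b = (a₊+a₋)/2 - 1/h_c` and `d = √(b² - a₊ a₋)` we have
`b < -√(a₊ a₋) < 0` and `b + d < 0`. -/
theorem stmt6 (ap am hc b d : ℝ) (hap : 0 < ap) (ham : 0 < am) (hhc : 0 < hc)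
    (h : Real.sqrt ap + Real.sqrt am < Real.sqrt (2 / hc))
    (hb : b = (ap + am) / 2 - 1 / hc) (hd : d = Real.sqrt (b ^ 2 - ap * am)) :
    b < -Real.sqrt (ap * am) ∧ -Real.sqrt (ap * am) < 0 ∧ b + d < 0 := by
  have hs : Real.sqrt ap + Real.sqrt am ≥ 0 := by positivity
  have hsq : (Real.sqrt ap + Real.sqrt am) ^ 2 < 2 / hc := by
    calc (Real.sqrt ap + Real.sqrt am) ^ 2
        < Real.sqrt (2 / hc) ^ 2 := by
          apply pow_lt_pow_left₀ h hs
          norm_num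
      _ = 2 / hc := Real.sq_sqrt (by positivity)
  have hexp : ap + am + 2 * Real.sqrt (ap * am) < 2 / hc := by
    have h1 : Real.sqrt ap ^ 2 = ap := Real.sq_sqrt hap.le
    have h2 : Real.sqrt am ^ 2 = am := Real.sq_sqrt ham.le
    have h3 : Real.sqrt ap * Real.sqrt am = Real.sqrt (ap * am) :=
      (Real.sqrt_mul hap.le am).symm
    nlinarith [hsq]
  have hbneg : b < -Real.sqrt (ap * am) := by
    have : 1 / hc = (2 / hc) / 2 := by ring
    rw [hb]
    linarith
  have hpos : 0 < Real.sqrt (ap * am) := Real.sqrt_pos.mpr (by positivity)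
  refine ⟨hbneg, by linarith, ?_⟩
  have hb0 : b < 0 := by linarith
  have hd2 : d ^ 2 = b ^ 2 - ap * am := by
    rw [hd]; exact Real.sq_sqrt (by nlinarith [Real.sq_sqrt (mul_nonneg hap.le ham.le), hpos])
  have hdnn : 0 ≤ d := hd ▸ Real.sqrt_nonneg _
  nlinarith [hd2, hdnn, hb0, mul_pos hap ham]
end

section
/- Let a_+, a_- > 0 and h_c > 0 with √(a_+) - √(a_-) > √(2/h_c), and set b = (a_+ + a_-)/2 - 1/h_c and d = √(b^2 - a_+ a_-). Then b > √(a_+ a_-) and b + d > a_-. -/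
/-- If `√a₊ - √a₋ > √(2/h_c)` with `a₊, a₋, h_c > 0`, then for
`b = (a₊+a₋)/2 - 1/h_c` and `d = √(b² - a₊ a₋)` we have
`b > √(a₊ a₋)` and `b + d > a₋`. -/
theorem stmt7 (ap am hc b d : ℝ) (hap : 0 < ap) (ham : 0 < am) (hhc : 0 < hc)
    (h : Real.sqrt ap - Real.sqrt am > Real.sqrt (2 / hc))
    (hb : b = (ap + am) / 2 - 1 / hc) (hd : d = Real.sqrt (b ^ 2 - ap * am)) :
    b > Real.sqrt (ap * am) ∧ b + d > am := by
  have h2hc : (0:ℝ) ≤ 2 / hc := by positivity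
  have hsq0 : (0:ℝ) ≤ Real.sqrt (2 / hc) := Real.sqrt_nonneg _
  have hsq : (Real.sqrt ap - Real.sqrt am) ^ 2 > 2 / hc := by
    calc (Real.sqrt ap - Real.sqrt am) ^ 2
        > (Real.sqrt (2 / hc)) ^ 2 := by
          apply pow_lt_pow_left₀ h hsq0 (by norm_num)
      _ = 2 / hc := Real.sq_sqrt h2hc
  have hap2 : Real.sqrt ap ^ 2 = ap := Real.sq_sqrt hap.le
  have ham2 : Real.sqrt am ^ 2 = am := Real.sq_sqrt ham.le
  have hprod : Real.sqrt (ap * am) = Real.sqrt ap * Real.sqrt am :=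
    Real.sqrt_mul hap.le am
  have hexp : ap + am - 2 * (Real.sqrt ap * Real.sqrt am) > 2 / hc := by
    nlinarith [hsq, hap2, ham2]
  have hb1 : b > Real.sqrt (ap * am) := by
    have h2 : 2 / hc = 2 * (1 / hc) := by ring
    rw [hb, hprod]
    linarith [hexp]
  refine ⟨hb1, ?_⟩
  have hsam : Real.sqrt am < Real.sqrt ap := by nlinarith [h, hsq0]
  have hamlt : am < Real.sqrt (ap * am) := by
    rw [hprod]
    nlinarith [ham2, hsam, Real.sqrt_pos.mpr ham]
  have hd0 : 0 ≤ d := hd ▸ Real.sqrt_nonneg _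
  linarith [hb1, hamlt, hd0]
end

section
/- Let a > 0, n > 1, h_c > 0, and define x_±(v) = ±a/v^n + h_c a^2 / (2(2n-1) v^{2n-1}) for v > 0. Then x_EH(v) := h_c a^2 / (2(2n-1) v^{2n-1}) satisfies the ODE d x_EH/dv = (h_c/2)(x_EH - x_+(v))(x_EH - x_-(v)) for all v > 0, and x_-(v) < x_EH(v) < x_+(v) for all sufficiently large v. -/
/-- In the solvable model with `n > 1`: `x_EH(v) = h_c a² / (2(2n-1) v^{2n-1})`
solves `dx/dv = (h_c/2)(x - x₊(v))(x - x₋(v))` on `(0,∞)` for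
`x_±(v) = ±a/v^n + h_c a²/(2(2n-1) v^{2n-1})`, and `x₋ < x_EH < x₊`
for all sufficiently large `v`. -/
theorem stmt13 (a n hc : ℝ) (ha : 0 < a) (hn : 1 < n) (hhc : 0 < hc)
    (xp xm xEH : ℝ → ℝ)
    (hxp : ∀ v : ℝ, xp v = a / v ^ n + hc * a ^ 2 / (2 * (2 * n - 1) * v ^ (2 * n - 1)))
    (hxm : ∀ v : ℝ, xm v = -(a / v ^ n) + hc * a ^ 2 / (2 * (2 * n - 1) * v ^ (2 * n - 1)))
    (hxEH : ∀ v : ℝ, xEH v = hc * a ^ 2 / (2 * (2 * n - 1) * v ^ (2 * n - 1))) :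
    (∀ v ∈ Set.Ioi (0 : ℝ),
      HasDerivAt xEH (hc / 2 * (xEH v - xp v) * (xEH v - xm v)) v) ∧
    (∃ V : ℝ, ∀ v ≥ V, xm v < xEH v ∧ xEH v < xp v) := by
  have h2n : (0:ℝ) < 2 * n - 1 := by linarith
  set C : ℝ := hc * a ^ 2 / (2 * (2 * n - 1)) with hC
  constructor
  · intro v hv
    have hv0 : (0:ℝ) < v := hv
    have hvn : (0:ℝ) < v ^ n := Real.rpow_pos_of_pos hv0 n
    -- xEH agrees with fun w => C * w ^ (-(2*n-1)) near v
    have heq : xEH =ᶠ[nhds v] fun w => C * w ^ (-(2 * n - 1)) := by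
      filter_upwards [IsOpen.mem_nhds isOpen_Ioi hv] with w hw
      have hw0 : (0:ℝ) < w := hw
      rw [hxEH, Real.rpow_neg hw0.le, hC]
      field_simp
    have hd : HasDerivAt (fun w : ℝ => C * w ^ (-(2 * n - 1)))
        (C * ((-(2 * n - 1)) * v ^ (-(2 * n - 1) - 1))) v := by
      exact (Real.hasDerivAt_rpow_const (Or.inl hv0.ne')).const_mul C
    have hd2 : HasDerivAt xEH (C * ((-(2 * n - 1)) * v ^ (-(2 * n - 1) - 1))) v :=
      hd.congr_of_eventuallyEq heq
    convert hd2 using 1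
    have h1 : xEH v - xp v = -(a / v ^ n) := by rw [hxEH, hxp]; ring
    have h2 : xEH v - xm v = a / v ^ n := by rw [hxEH, hxm]; ring
    rw [h1, h2]
    have hpow : v ^ (-(2 * n - 1) - 1) = (v ^ n * v ^ n)⁻¹ := by
      rw [show -(2 * n - 1) - 1 = -(n + n) by ring, Real.rpow_neg hv0.le,
        Real.rpow_add hv0]
    rw [hpow, hC]
    field_simp
  · refine ⟨1, fun v hv => ?_⟩
    have hv0 : (0:ℝ) < v := lt_of_lt_of_le one_pos hv
    have hvn : (0:ℝ) < a / v ^ n := div_pos ha (Real.rpow_pos_of_pos hv0 n)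
    constructor
    · rw [hxm, hxEH]; linarith
    · rw [hxp, hxEH]; linarith
end

section
/- Let a > 0, n > 1, h_c > 0, v_e > 0, and define x(v) = (2/h_c)/(v_e - v) + h_c a^2/(2(2n-1) v^{2n-1}) for v > v_e. Then x solves dx/dv = (h_c/2)(x - x_+(v))(x - x_-(v)) with x_±(v) = ±a/v^n + h_c a^2/(2(2n-1) v^{2n-1}), and lim_{v→∞} x(v) = 0 with x(v) < x_EH(v) := h_c a^2/(2(2n-1) v^{2n-1}) for all v > v_e. -/
/-!
Writing `x = y + x_EH` with `y(v) = (2/h_c)/(v_e - v)`, the Riccati equation splits in two: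
since `x_± = x_EH ± a/v^n`, its right-hand side is `(h_c/2)(y² - a²/v^{2n})`, and indeed
`y' = (h_c/2) y²` while `x_EH' = -(h_c/2) a²/v^{2n}`. Both summands tend to `0`, and `y < 0`
beyond `v_e`.
-/

open Filter Topology

theorem HasDerivAt.riccati_shift {y c : ℝ → ℝ} {k b v : ℝ}
    (hy : HasDerivAt y (k * y v ^ 2) v) (hc : HasDerivAt c (-(k * b ^ 2)) v) :
    HasDerivAt (fun w => y w + c w)
      (k * (y v + c v - (b + c v)) * (y v + c v - (-b + c v))) v :=
  (hy.add hc).congr_deriv (by ring)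

theorem hasDerivAt_two_div_div_const_sub {k ve v : ℝ} (hk : k ≠ 0) (hv : v ≠ ve) :
    HasDerivAt (fun w => 2 / k / (ve - w)) (k / 2 * (2 / k / (ve - v)) ^ 2) v := by
  have hsub : ve - v ≠ 0 := sub_ne_zero.mpr hv.symm
  refine ((hasDerivAt_const v (2 / k)).div ((hasDerivAt_id' v).const_sub ve) hsub).congr_deriv ?_
  field_simp
  ring

theorem hasDerivAt_div_rpow_two_mul_sub_one {k a n v : ℝ} (hn : 2 * n - 1 ≠ 0) (hv : 0 < v) :
    HasDerivAt (fun w => k * a ^ 2 / (2 * (2 * n - 1) * w ^ (2 * n - 1)))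
      (-(k / 2 * (a / v ^ n) ^ 2)) v := by
  have hpow : v ^ (2 * n - 1) = v ^ n * v ^ n / v := by
    rw [Real.rpow_sub_one hv.ne', ← Real.rpow_add hv, two_mul]
  have hpow' : v ^ (2 * n - 1 - 1) = v ^ n * v ^ n / v / v := by
    rw [Real.rpow_sub_one hv.ne', hpow]
  have hvn : 0 < v ^ n := Real.rpow_pos_of_pos hv n
  refine ((hasDerivAt_const v (k * a ^ 2)).div
    ((Real.hasDerivAt_rpow_const (p := 2 * n - 1) (Or.inl hv.ne')).const_mul (2 * (2 * n - 1)))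
    (by rw [hpow]; positivity)).congr_deriv ?_
  rw [hpow, hpow']
  field_simp
  ring

theorem tendsto_const_div_const_sub_atTop (k ve : ℝ) :
    Tendsto (fun v : ℝ => k / (ve - v)) atTop (𝓝 0) :=
  tendsto_const_nhds.div_atBot <| (tendsto_atBot_add_const_left _ ve tendsto_neg_atTop_atBot).congr
    fun v => (sub_eq_add_neg ve v).symm

theorem tendsto_div_rpow_atTop {k c p : ℝ} (hc : 0 < c) (hp : 0 < p) :
    Tendsto (fun v : ℝ => k / (c * v ^ p)) atTop (𝓝 0) :=
  tendsto_const_nhds.div_atTop ((tendsto_rpow_atTop hp).const_mul_atTop hc)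

theorem stmt14_general (a n hc ve : ℝ) (hn : 1 < n) (hhc : 0 < hc) (hve : 0 < ve)
    (xp xm x xEH : ℝ → ℝ)
    (hxp : ∀ v : ℝ, xp v = a / v ^ n + hc * a ^ 2 / (2 * (2 * n - 1) * v ^ (2 * n - 1)))
    (hxm : ∀ v : ℝ, xm v = -(a / v ^ n) + hc * a ^ 2 / (2 * (2 * n - 1) * v ^ (2 * n - 1)))
    (hx : ∀ v : ℝ, x v = (2 / hc) / (ve - v) + hc * a ^ 2 / (2 * (2 * n - 1) * v ^ (2 * n - 1)))
    (hxEH : ∀ v : ℝ, xEH v = hc * a ^ 2 / (2 * (2 * n - 1) * v ^ (2 * n - 1))) :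
    (∀ v ∈ Set.Ioi ve, HasDerivAt x (hc / 2 * (x v - xp v) * (x v - xm v)) v) ∧
    Filter.Tendsto x Filter.atTop (nhds 0) ∧
    (∀ v ∈ Set.Ioi ve, x v < xEH v) := by
  have hp : 0 < 2 * n - 1 := by linarith
  have hx_eq : x = fun v => 2 / hc / (ve - v) + hc * a ^ 2 / (2 * (2 * n - 1) * v ^ (2 * n - 1)) :=
    funext hx
  refine ⟨fun v hv => ?_, ?_, fun v hv => ?_⟩
  · rw [hxp, hxm, hx_eq]
    exact (hasDerivAt_two_div_div_const_sub hhc.ne' (ne_of_gt hv)).riccati_shift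
      (hasDerivAt_div_rpow_two_mul_sub_one hp.ne' (hve.trans hv))
  · rw [hx_eq, ← add_zero (0 : ℝ)]
    exact (tendsto_const_div_const_sub_atTop _ _).add (tendsto_div_rpow_atTop (by positivity) hp)
  · have hy : 2 / hc / (ve - v) < 0 := div_neg_of_pos_of_neg (by positivity) (sub_neg.mpr hv)
    rw [hx, hxEH]
    linarith

/-- Interior solution in the solvable model with `n > 1`:
`x(v) = (2/h_c)/(v_e - v) + h_c a²/(2(2n-1) v^{2n-1})` on `(v_e, ∞)` solves
`dx/dv = (h_c/2)(x - x₊(v))(x - x₋(v))`, tends to `0` as `v → ∞`, and satisfies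
`x(v) < x_EH(v) = h_c a²/(2(2n-1) v^{2n-1})` for all `v > v_e`. -/
theorem stmt14 (a n hc ve : ℝ) (ha : 0 < a) (hn : 1 < n) (hhc : 0 < hc) (hve : 0 < ve)
    (xp xm x xEH : ℝ → ℝ)
    (hxp : ∀ v : ℝ, xp v = a / v ^ n + hc * a ^ 2 / (2 * (2 * n - 1) * v ^ (2 * n - 1)))
    (hxm : ∀ v : ℝ, xm v = -(a / v ^ n) + hc * a ^ 2 / (2 * (2 * n - 1) * v ^ (2 * n - 1)))
    (hx : ∀ v : ℝ, x v = (2 / hc) / (ve - v) + hc * a ^ 2 / (2 * (2 * n - 1) * v ^ (2 * n - 1)))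
    (hxEH : ∀ v : ℝ, xEH v = hc * a ^ 2 / (2 * (2 * n - 1) * v ^ (2 * n - 1))) :
    (∀ v ∈ Set.Ioi ve, HasDerivAt x (hc / 2 * (x v - xp v) * (x v - xm v)) v) ∧
    Filter.Tendsto x Filter.atTop (nhds 0) ∧
    (∀ v ∈ Set.Ioi ve, x v < xEH v) :=
  stmt14_general a n hc ve hn hhc hve xp xm x xEH hxp hxm hx hxEH
end

section
/- Let h_c > 0 and let x_+ : [v_0, ∞) → (0, ∞) be continuous and strictly decreasing with lim_{v→∞} x_+(v) = 0. Suppose x : [v_0, ∞) → ℝ is differentiable, satisfies x(v_0) ≤ 0, and dx/dv = (h_c/2)(x(v) - x_+(v)) x(v) for all v ≥ v_0. Then x(v) ≤ 0 for all v ≥ v_0, x is nondecreasing, and lim_{v→∞} x(v) = 0. -/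
open Set Filter Topology

/-- Once `f` vanishes, Grönwall (`|f'| ≤ K |f|` on compacts) forces it to stay zero, so by the
intermediate value theorem it can never become positive. -/
theorem nonpos_of_hasDerivAt_mul {f g : ℝ → ℝ} {a : ℝ} (hg : ContinuousOn g (Ici a))
    (hf : ∀ t ∈ Ici a, HasDerivAt f (g t * f t) t) (ha : f a ≤ 0) :
    ∀ t ∈ Ici a, f t ≤ 0 := by
  intro b hb
  by_contra! hfb
  have hfc : ContinuousOn f (Icc a b) := fun t ht =>
    (hf t ht.1).continuousAt.continuousWithinAt
  obtain ⟨c, hc, hfc0⟩ := intermediate_value_Icc hb hfc ⟨ha, hfb.le⟩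
  have hcb : Icc c b ⊆ Ici a := fun t ht => hc.1.trans ht.1
  obtain ⟨K, hK⟩ := isCompact_Icc.exists_bound_of_continuousOn (hg.mono hcb)
  have hfb0 : f b = 0 :=
    eq_zero_of_abs_deriv_le_mul_abs_self_of_eq_zero_right
      (hfc.mono (Icc_subset_Icc_left hc.1))
      (fun t ht => (hf t (hcb (Ico_subset_Icc_self ht))).hasDerivWithinAt) hfc0
      (fun t ht => by
        rw [norm_mul]
        exact mul_le_mul_of_nonneg_right (hK t (Ico_subset_Icc_self ht)) (norm_nonneg _))
      b ⟨hc.2, le_rfl⟩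
  exact hfb.ne' hfb0

theorem tendsto_atTop_of_hasDerivAt_ge {f f' : ℝ → ℝ} {a c : ℝ} (hc : 0 < c)
    (hf : ∀ t ∈ Ici a, HasDerivAt f (f' t) t) (hf' : ∀ t ∈ Ici a, c ≤ f' t) :
    Tendsto f atTop atTop := by
  have hlin : ∀ t ∈ Ici a, c * (t - a) ≤ f t - f a := by
    refine fun t ht => (convex_Ici a).mul_sub_le_image_sub_of_le_deriv
      (fun s hs => (hf s hs).continuousAt.continuousWithinAt)
      (fun s hs => (hf s (interior_subset hs)).differentiableAt.differentiableWithinAt)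
      (fun s hs => ?_) a self_mem_Ici t ht ht
    rw [(hf s (interior_subset hs)).deriv]
    exact hf' s (interior_subset hs)
  have hlin_tendsto : Tendsto (fun t => f a + c * (t - a)) atTop atTop :=
    tendsto_atTop_add_const_left _ _
      ((tendsto_atTop_add_const_right _ _ tendsto_id).const_mul_atTop hc)
  refine tendsto_atTop_mono' atTop ?_ hlin_tendsto
  filter_upwards [eventually_ge_atTop a] with t ht
  linarith [hlin t ht]

theorem tendsto_zero_of_monotoneOn_of_nonpos {f : ℝ → ℝ} {a : ℝ} (hmono : MonotoneOn f (Ici a))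
    (hle : ∀ t ∈ Ici a, f t ≤ 0) (hexceeds : ∀ l < 0, ∃ t ∈ Ici a, l < f t) :
    Tendsto f atTop (𝓝 0) := by
  refine tendsto_order.2 ⟨fun l hl => ?_, fun u hu => ?_⟩
  · obtain ⟨s, hs, hls⟩ := hexceeds l hl
    filter_upwards [eventually_ge_atTop s] with t ht
    exact hls.trans_le (hmono hs (le_trans hs ht) ht)
  · filter_upwards [eventually_ge_atTop a] with t ht
    exact (hle t ht).trans_lt hu

theorem stmt19_general (hc v0 : ℝ) (hhc : 0 < hc)
    (xp : ℝ → ℝ)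
    (hcont : ContinuousOn xp (Set.Ici v0))
    (hpos : ∀ v ∈ Set.Ici v0, 0 < xp v)
    (x : ℝ → ℝ)
    (hderiv : ∀ v ∈ Set.Ici v0, HasDerivAt x (hc / 2 * (x v - xp v) * x v) v)
    (hx0 : x v0 ≤ 0) :
    (∀ v ∈ Set.Ici v0, x v ≤ 0) ∧ MonotoneOn x (Set.Ici v0) ∧
    Filter.Tendsto x Filter.atTop (nhds 0) := by
  have hxcont : ContinuousOn x (Ici v0) := fun v hv =>
    (hderiv v hv).continuousAt.continuousWithinAt
  have hnonpos : ∀ v ∈ Ici v0, x v ≤ 0 :=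
    nonpos_of_hasDerivAt_mul (continuousOn_const.mul (hxcont.sub hcont)) hderiv hx0
  have hmono : MonotoneOn x (Ici v0) := by
    refine monotoneOn_of_hasDerivWithinAt_nonneg (convex_Ici v0) hxcont
      (fun v hv => (hderiv v (interior_subset hv)).hasDerivWithinAt) (fun v hv => ?_)
    have hv := interior_subset hv
    have hxv := hnonpos v hv
    have hcoef : hc / 2 * (x v - xp v) ≤ 0 :=
      mul_nonpos_of_nonneg_of_nonpos (by positivity) (by linarith [hpos v hv])
    exact mul_nonneg_of_nonpos_of_nonpos hcoef hxv
  refine ⟨hnonpos, hmono, tendsto_zero_of_monotoneOn_of_nonpos hmono hnonpos fun l hl => ?_⟩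
  by_contra! hbelow
  -- Staying below `l < 0` keeps the speed above `(hc / 2) l²`, which is incompatible with `x ≤ 0`.
  have hspeed : ∀ v ∈ Ici v0, hc / 2 * (l * l) ≤ hc / 2 * (x v - xp v) * x v := by
    intro v hv
    have hsq : l * l ≤ (x v - xp v) * x v := by
      nlinarith [hbelow v hv, hpos v hv]
    rw [mul_assoc]
    exact mul_le_mul_of_nonneg_left hsq (by positivity)
  have hgrowth : Tendsto x atTop atTop :=
    tendsto_atTop_of_hasDerivAt_ge (mul_pos (half_pos hhc) (mul_pos_of_neg_of_neg hl hl))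
      hderiv hspeed
  obtain ⟨v, hv, hxv⟩ := ((eventually_ge_atTop v0).and (hgrowth.eventually_gt_atTop 0)).exists
  exact (hnonpos v hv).not_gt hxv

/-- Lemma 3.1 (Case 1, constant `h = h_c`): if `x₊ > 0` is continuous, strictly
decreasing with `x₊ → 0`, and `x` solves `dx/dv = (h_c/2)(x - x₊(v)) x` on
`[v₀, ∞)` with `x(v₀) ≤ 0`, then `x ≤ 0`, `x` is nondecreasing, and `x → 0`. -/
theorem stmt19 (hc v0 : ℝ) (hhc : 0 < hc)
    (xp : ℝ → ℝ)
    (hcont : ContinuousOn xp (Set.Ici v0))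
    (hpos : ∀ v ∈ Set.Ici v0, 0 < xp v)
    (hanti : StrictAntiOn xp (Set.Ici v0))
    (hlim : Filter.Tendsto xp Filter.atTop (nhds 0))
    (x : ℝ → ℝ)
    (hderiv : ∀ v ∈ Set.Ici v0, HasDerivAt x (hc / 2 * (x v - xp v) * x v) v)
    (hx0 : x v0 ≤ 0) :
    (∀ v ∈ Set.Ici v0, x v ≤ 0) ∧ MonotoneOn x (Set.Ici v0) ∧
    Filter.Tendsto x Filter.atTop (nhds 0) :=
  stmt19_general hc v0 hhc xp hcont hpos x hderiv hx0
end
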